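/- arXiv:quant-ph/9810065 — 6 statements merged into one kernel-verified Lean document; each statement's English description precedes it below -/
import Mathlib

section
/- For an odd integer n > 2, the circulant matrix M_n = circ(m₀,...,m_{n−1}) with m_j = (1/√n)·e^{(2πi/n)·j²} is unitary. -/
/-!
Write `ψ` for the standard additive character of `ZMod n`, so that `M_{ij} = ψ((j - i)²) / √n`.
Expanding the square, `ψ((k - i)²) · conj ψ((k - j)²) = ψ(i² - j²) · ψ(2k(j - i))`, and summing
over `k` the orthogonality of the primitive character `ψ` kills every off-diagonal entry of `M M*`
as soon as `2` is invertible, i.e. as soon as `n` is odd.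
-/

open Complex Real Matrix

/-- The circulant (shift) matrix whose `(i,j)` entry is `a (j - i)`. -/
def circ {n : ℕ} (a : ZMod n → ℂ) : Matrix (ZMod n) (ZMod n) ℂ :=
  fun i j => a (j - i)

/-- The circulant Gauss matrix `M_n` with `m_j = (1/√n)·e^{(2πi/n)·j²}`. -/
noncomputable def gaussMatrix (n : ℕ) : Matrix (ZMod n) (ZMod n) ℂ :=
  circ (fun j => (1 / Real.sqrt n : ℂ) *
    Complex.exp (2 * Real.pi * Complex.I * ((j.val : ℂ) ^ 2) / n))

theorem AddChar.sum_apply_sub_sq_mul_conj {R K : Type*} [CommRing R] [Fintype R] [DecidableEq R]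
    [RCLike K] {ψ : AddChar R K} (hψ : ψ.IsPrimitive) (h2 : IsUnit (2 : R)) (i j : R) :
    ∑ k, ψ ((k - i) ^ 2) * starRingEnd K (ψ ((k - j) ^ 2)) =
      if i = j then (Fintype.card R : K) else 0 := by
  calc ∑ k, ψ ((k - i) ^ 2) * starRingEnd K (ψ ((k - j) ^ 2))
      = ∑ k, ψ (i ^ 2 - j ^ 2) * ψ (k * (2 * (j - i))) := by
        refine Finset.sum_congr rfl fun k _ => ?_
        rw [← map_neg_eq_conj, ← map_add_eq_mul, ← map_add_eq_mul]
        ring_nf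
    _ = ψ (i ^ 2 - j ^ 2) * if 2 * (j - i) = 0 then (Fintype.card R : K) else 0 := by
        rw [← Finset.mul_sum, sum_mulShift _ hψ, Nat.cast_ite, Nat.cast_zero]
    _ = if i = j then (Fintype.card R : K) else 0 := by
        simp only [h2.mul_right_eq_zero, sub_eq_zero, eq_comm (a := j)]
        split_ifs with hij <;> simp [hij]

theorem ZMod.isUnit_two_of_odd {n : ℕ} (hn : Odd n) : IsUnit (2 : ZMod n) := by
  exact_mod_cast (ZMod.isUnit_iff_coprime 2 n).mpr (Nat.coprime_two_left.mpr hn)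

theorem gaussMatrix_apply {n : ℕ} [NeZero n] (i j : ZMod n) :
    gaussMatrix n i j = (√n : ℂ)⁻¹ * ZMod.stdAddChar ((j - i) ^ 2) := by
  have hsq : (((j - i).val ^ 2 : ℤ) : ZMod n) = (j - i) ^ 2 := by push_cast; simp
  rw [gaussMatrix, circ, one_div, ← hsq, ZMod.stdAddChar_coe]
  push_cast
  ring_nf

theorem gaussMatrix_unitary_general (n : ℕ) [NeZero n] (hn : Odd n) :
    gaussMatrix n * (gaussMatrix n)ᴴ = 1 ∧ (gaussMatrix n)ᴴ * gaussMatrix n = 1 := by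
  have hn0 : (n : ℂ) ≠ 0 := NeZero.ne _
  have hsqrt : (√n : ℂ)⁻¹ * starRingEnd ℂ (√n : ℂ)⁻¹ = (n : ℂ)⁻¹ := by
    rw [map_inv₀, Complex.conj_ofReal, ← mul_inv, ← ofReal_mul,
      mul_self_sqrt n.cast_nonneg, ofReal_natCast]
  have hmul : gaussMatrix n * (gaussMatrix n)ᴴ = 1 := by
    ext i j
    calc (gaussMatrix n * (gaussMatrix n)ᴴ) i j
        = (n : ℂ)⁻¹ * ∑ k, ZMod.stdAddChar ((k - i) ^ 2) *
            starRingEnd ℂ (ZMod.stdAddChar ((k - j) ^ 2)) := by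
          rw [mul_apply, Finset.mul_sum]
          refine Finset.sum_congr rfl fun k _ => ?_
          rw [conjTranspose_apply, gaussMatrix_apply, gaussMatrix_apply, star_mul',
            Complex.star_def, ← hsqrt]
          ring
      _ = (1 : Matrix (ZMod n) (ZMod n) ℂ) i j := by
          rw [AddChar.sum_apply_sub_sq_mul_conj (ZMod.isPrimitive_stdAddChar n)
            (ZMod.isUnit_two_of_odd hn), one_apply, ZMod.card]
          split_ifs <;> simp [hn0]
  exact ⟨hmul, mul_eq_one_comm.mp hmul⟩

theorem gaussMatrix_unitary (n : ℕ) [NeZero n] (hn : Odd n) (hn2 : 2 < n) :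
    gaussMatrix n * (gaussMatrix n)ᴴ = 1 ∧ (gaussMatrix n)ᴴ * gaussMatrix n = 1 :=
  gaussMatrix_unitary_general n hn
end

section
/- Let n be an odd integer > 2 and M_n = circ(m₀,...,m_{n−1}) with m_j = (1/√n)·e^{(2πi/n)·j²}. If A is a special shift matrix, then A·M_n is a special shift matrix. -/
open Complex Real Matrix

/-- A special shift matrix with parameters `l, g` (where `n = l·g`). -/
def IsSpecialShift (n l g : ℕ) (A : Matrix (ZMod n) (ZMod n) ℂ) : Prop :=
  ∃ (a : ZMod n → ℂ) (c : ℂ) (k : ℤ),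
    A = circ a ∧
    (∀ j : ℕ, j < g → a ((j * l : ℕ) : ZMod n) =
      c * Complex.exp (2 * Real.pi * Complex.I * ((k : ℂ) * (l : ℂ) * (j : ℂ) ^ 2) / n)) ∧
    (∀ t : ZMod n, (¬ ∃ j : ℕ, j < g ∧ t = ((j * l : ℕ) : ZMod n)) → a t = 0)

set_option maxHeartbeats 1000000

noncomputable def eN (N : ℕ) (x : ℤ) : ℂ := Complex.exp (2 * Real.pi * Complex.I * x / N)

lemma eN_add (N : ℕ) (x y : ℤ) : eN N (x + y) = eN N x * eN N y := by
  rw [eN, eN, eN, ← Complex.exp_add]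
  congr 1
  push_cast
  ring

lemma eN_int_dvd (N : ℕ) (hN : N ≠ 0) {x : ℤ} (h : (N : ℤ) ∣ x) : eN N x = 1 := by
  obtain ⟨y, rfl⟩ := h
  have hN' : (N : ℂ) ≠ 0 := Nat.cast_ne_zero.mpr hN
  rw [eN]
  have harg : 2 * (Real.pi : ℂ) * Complex.I * (((N : ℤ) * y : ℤ) : ℂ) / N
      = y * (2 * Real.pi * Complex.I) := by
    push_cast
    field_simp
  rw [harg, Complex.exp_int_mul_two_pi_mul_I]

lemma eN_congr (N : ℕ) (hN : N ≠ 0) {x y : ℤ} (h : (N : ℤ) ∣ x - y) : eN N x = eN N y := by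
  have hx : x = y + (x - y) := by ring
  rw [hx, eN_add, eN_int_dvd N hN h, mul_one]

lemma eN_pow (N : ℕ) (x : ℤ) (m : ℕ) : eN N x ^ m = eN N (m * x) := by
  rw [eN, eN, ← Complex.exp_nat_mul]
  congr 1
  push_cast
  ring

lemma sum_range_zmod (N : ℕ) [NeZero N] (F : ℤ → ℂ) :
    ∑ j ∈ Finset.range N, F j = ∑ x : ZMod N, F x.val := by
  refine Finset.sum_bij' (fun j _ => ((j : ZMod N))) (fun x _ => x.val)
    (fun a _ => Finset.mem_univ _) (fun x _ => Finset.mem_range.mpr (ZMod.val_lt x))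
    (fun a ha => ?_) (fun x _ => ZMod.natCast_rightInverse x) (fun a ha => ?_)
  · exact ZMod.val_cast_of_lt (Finset.mem_range.mp ha)
  · rw [ZMod.val_cast_of_lt (Finset.mem_range.mp ha)]

lemma sum_range_translate (N : ℕ) (hN : N ≠ 0) (F : ℤ → ℂ)
    (hF : ∀ x y : ℤ, (N : ℤ) ∣ x - y → F x = F y) (c : ℤ) :
    ∑ j ∈ Finset.range N, F (j + c) = ∑ j ∈ Finset.range N, F j := by
  haveI : NeZero N := ⟨hN⟩
  rw [sum_range_zmod N (fun z => F (z + c)), sum_range_zmod N F]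
  refine Fintype.sum_bijective (fun x : ZMod N => x + (c : ZMod N))
    (Equiv.addRight ((c : ℤ) : ZMod N)).bijective _ _ (fun x => ?_)
  refine hF _ _ ?_
  rw [← ZMod.intCast_zmod_eq_zero_iff_dvd]
  push_cast
  rw [ZMod.natCast_val, ZMod.natCast_val, ZMod.cast_id, ZMod.cast_id]
  ring

lemma sum_range_mul_split (m k : ℕ) (hm : m ≠ 0) (F : ℕ → ℂ) :
    ∑ j ∈ Finset.range (m * k), F j
      = ∑ p ∈ Finset.range m ×ˢ Finset.range k, F (p.1 + m * p.2) := by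
  refine Finset.sum_bij' (fun (j : ℕ) _ => (j % m, j / m)) (fun (p : ℕ × ℕ) _ => p.1 + m * p.2)
    ?_ ?_ ?_ ?_ ?_
  · intro j hj
    rw [Finset.mem_range] at hj
    rw [Finset.mem_product, Finset.mem_range, Finset.mem_range]
    exact ⟨Nat.mod_lt _ (Nat.pos_of_ne_zero hm), Nat.div_lt_of_lt_mul hj⟩
  · intro p hp
    rw [Finset.mem_product, Finset.mem_range, Finset.mem_range] at hp
    rw [Finset.mem_range]
    calc p.1 + m * p.2 < m + m * p.2 := by omega
      _ = m * (p.2 + 1) := by ring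
      _ ≤ m * k := Nat.mul_le_mul_left m hp.2
  · intro j _
    exact Nat.mod_add_div j m
  · intro p hp
    rw [Finset.mem_product, Finset.mem_range, Finset.mem_range] at hp
    have h1 : (p.1 + m * p.2) % m = p.1 := by
      rw [Nat.add_mul_mod_self_left, Nat.mod_eq_of_lt hp.1]
    have h2 : (p.1 + m * p.2) / m = p.2 := by
      rw [Nat.add_mul_div_left _ _ (Nat.pos_of_ne_zero hm), Nat.div_eq_of_lt hp.1, zero_add]
    exact Prod.ext h1 h2
  · intro j _
    rw [Nat.mod_add_div j m]

lemma Ssplit (g d g₁ : ℕ) (aZ a₁ : ℤ) (hg0 : g ≠ 0) (hg₁0 : g₁ ≠ 0)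
    (hg₁ : g = d * g₁) (ha₁ : aZ = (d : ℤ) * a₁) (hgZ : (g : ℤ) = (d : ℤ) * (g₁ : ℤ)) (T : ℤ) :
    ∑ j ∈ Finset.range g, eN g (aZ * (j : ℤ) ^ 2 - 2 * T * (j : ℤ))
      = (∑ j ∈ Finset.range g₁, eN g (aZ * (j : ℤ) ^ 2 - 2 * T * (j : ℤ))) *
        (∑ j ∈ Finset.range d, eN g (-(2 * T * g₁)) ^ j) := by
  have hgsplit : g = g₁ * d := by rw [hg₁]; ring
  rw [Finset.sum_mul_sum]
  have h1 : ∑ j ∈ Finset.range g, eN g (aZ * (j : ℤ) ^ 2 - 2 * T * (j : ℤ))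
      = ∑ j ∈ Finset.range (g₁ * d), eN g (aZ * (j : ℤ) ^ 2 - 2 * T * (j : ℤ)) := by
    rw [← hgsplit]
  rw [h1, sum_range_mul_split g₁ d hg₁0, Finset.sum_product]
  refine Finset.sum_congr rfl (fun j₁ _ => Finset.sum_congr rfl (fun j₂ _ => ?_))
  rw [eN_pow, ← eN_add]
  refine eN_congr g hg0 ⟨a₁ * (2 * j₁ * j₂ + g₁ * j₂ ^ 2), ?_⟩
  push_cast
  linear_combination ((g₁ : ℤ) * (2 * j₁ * j₂ + g₁ * j₂ ^ 2)) * ha₁ -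
    (a₁ * (2 * (j₁ : ℤ) * j₂ + g₁ * j₂ ^ 2)) * hgZ

lemma Szero (g d g₁ : ℕ) (hg0 : g ≠ 0) (hg₁0 : g₁ ≠ 0) (hd2 : ¬ (2 ∣ d))
    (hgZ : (g : ℤ) = (d : ℤ) * (g₁ : ℤ)) (T : ℤ) (hT : ¬ ((d : ℤ) ∣ T)) :
    (∑ j ∈ Finset.range d, eN g (-(2 * T * g₁)) ^ j) = 0 := by
  set z := eN g (-(2 * T * g₁)) with hz
  have hzd : z ^ d = 1 := by
    rw [hz, eN_pow]
    exact eN_int_dvd g hg0 ⟨-(2 * T), by push_cast; rw [hgZ]; ring⟩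
  have hgC : (g : ℂ) ≠ 0 := Nat.cast_ne_zero.mpr hg0
  have hpiI : (2 * (Real.pi : ℂ) * Complex.I) ≠ 0 := by
    simp [Real.pi_ne_zero, Complex.I_ne_zero]
  have hz1 : z ≠ 1 := by
    intro h1
    rw [hz, eN, Complex.exp_eq_one_iff] at h1
    obtain ⟨mm, hm⟩ := h1
    have h1' : (2 * (Real.pi : ℂ) * Complex.I) * (((-(2 * T * g₁) : ℤ) : ℂ) / g)
        = (2 * (Real.pi : ℂ) * Complex.I) * mm := by
      rw [← mul_div_assoc, hm]; ring
    have h2' := mul_left_cancel₀ hpiI h1'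
    rw [div_eq_iff hgC] at h2'
    have hZ : -(2 * T * (g₁ : ℤ)) = mm * g := by exact_mod_cast h2'
    apply hT
    have hg₁Z : (g₁ : ℤ) ≠ 0 := Int.natCast_ne_zero.mpr hg₁0
    have h2T : 2 * T = -mm * d := by
      have hcancel : (2 * T) * (g₁ : ℤ) = (-mm * d) * g₁ := by
        rw [hgZ] at hZ; linarith
      exact mul_right_cancel₀ hg₁Z hcancel
    have hd2T : (d : ℤ) ∣ 2 * T := ⟨-mm, by linarith⟩
    have hcop2 : Nat.gcd d 2 = 1 := by
      rcases (Nat.dvd_prime Nat.prime_two).mp (Nat.gcd_dvd_right d 2) with h | h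
      · exact h
      · exact absurd (h ▸ Nat.gcd_dvd_left d 2) hd2
    have hic : IsCoprime (d : ℤ) ((2 : ℕ) : ℤ) := Nat.isCoprime_iff_coprime.mpr hcop2
    have hic' : IsCoprime (d : ℤ) (2 : ℤ) := by exact_mod_cast hic
    exact hic'.dvd_of_dvd_mul_left hd2T
  rw [geom_sum_eq hz1, hzd, sub_self, zero_div]

lemma Sval (g d g₁ : ℕ) (aZ a₁ u w : ℤ) (hg₁0 : g₁ ≠ 0)
    (ha₁ : aZ = (d : ℤ) * a₁) (hw : a₁ * u - 1 = (g₁ : ℤ) * w)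
    (heg₁ : ∀ x : ℤ, eN g ((d : ℤ) * x) = eN g₁ x) (s : ℤ) :
    ∑ j ∈ Finset.range g₁, eN g (aZ * (j : ℤ) ^ 2 - 2 * ((d : ℤ) * s) * (j : ℤ))
      = eN g₁ (-(u * s ^ 2)) * ∑ j ∈ Finset.range g₁, eN g₁ (a₁ * (j : ℤ) ^ 2) := by
  have step1 : ∀ j : ℕ, eN g (aZ * (j : ℤ) ^ 2 - 2 * ((d : ℤ) * s) * (j : ℤ))
      = eN g₁ (a₁ * (j : ℤ) ^ 2 - 2 * s * (j : ℤ)) := by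
    intro j
    rw [← heg₁ (a₁ * (j : ℤ) ^ 2 - 2 * s * (j : ℤ))]
    congr 1
    rw [ha₁]; ring
  have step2 : ∀ j : ℕ, eN g₁ (a₁ * (j : ℤ) ^ 2 - 2 * s * (j : ℤ))
      = eN g₁ (-(u * s ^ 2)) * eN g₁ (a₁ * ((j : ℤ) + -(u * s)) ^ 2) := by
    intro j
    rw [← eN_add]
    refine eN_congr g₁ hg₁0 ⟨-(w * (u * s ^ 2 - 2 * s * (j : ℤ))), ?_⟩
    linear_combination (-(u * s ^ 2 - 2 * s * (j : ℤ))) * hw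
  simp_rw [step1, step2, ← Finset.mul_sum]
  congr 1
  refine sum_range_translate g₁ hg₁0 (fun x => eN g₁ (a₁ * x ^ 2)) (fun x y hxy => ?_) (-(u * s))
  obtain ⟨w', hw'⟩ := hxy
  exact eN_congr g₁ hg₁0 ⟨a₁ * (x + y) * w', by linear_combination a₁ * (x + y) * hw'⟩

noncomputable def convFn (n : ℕ) [NeZero n] (a : ZMod n → ℂ) : ZMod n → ℂ := fun u =>
  ∑ s : ZMod n, a s * ((1 / Real.sqrt n : ℂ) *
    Complex.exp (2 * Real.pi * Complex.I * (((u - s).val : ℂ) ^ 2) / n))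

theorem specialShift_mul_gaussMatrix (n : ℕ) [NeZero n] (hodd : Odd n) (hn2 : 2 < n)
    (l g : ℕ) (hn : n = l * g) (A : Matrix (ZMod n) (ZMod n) ℂ)
    (hA : IsSpecialShift n l g A) :
    ∃ l' g' : ℕ, n = l' * g' ∧ IsSpecialShift n l' g' (A * gaussMatrix n) := by
  obtain ⟨a, c, k, hAeq, haval, ha0⟩ := hA
  have hn0 : n ≠ 0 := NeZero.ne n
  have hl0 : l ≠ 0 := by rintro rfl; simp at hn; exact hn0 hn
  have hg0 : g ≠ 0 := by rintro rfl; simp at hn; exact hn0 hn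
  have hnot2 : ¬ (2 ∣ n) := by rw [Nat.odd_iff] at hodd; omega
  -- basic integer data
  set aZ : ℤ := k + l with haZdef
  set d : ℕ := Int.gcd aZ g with hddef
  have hdg : d ∣ g := Int.natCast_dvd_natCast.mp (Int.gcd_dvd_right _ _)
  have hgn : g ∣ n := ⟨l, by rw [hn, mul_comm]⟩
  have hdn : d ∣ n := hdg.trans hgn
  have hd0 : d ≠ 0 := by
    intro h
    rw [hddef] at h
    have := (Int.gcd_eq_zero_iff.mp h).2
    exact hg0 (by exact_mod_cast this)
  have hd2 : ¬ (2 ∣ d) := fun h => hnot2 (h.trans hdn)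
  set g₁ : ℕ := g / d with hg₁def
  have hg₁ : g = d * g₁ := (Nat.mul_div_cancel' hdg).symm
  have hg₁0 : g₁ ≠ 0 := by
    intro h; rw [h, mul_zero] at hg₁; exact hg0 hg₁
  set a₁ : ℤ := aZ / d with ha₁def
  have hda : (d : ℤ) ∣ aZ := Int.gcd_dvd_left _ _
  have ha₁ : aZ = (d : ℤ) * a₁ := (Int.mul_ediv_cancel' hda).symm
  have hgZ : (g : ℤ) = (d : ℤ) * (g₁ : ℤ) := by exact_mod_cast hg₁
  -- coprimality and Bezout
  have hcop : Int.gcd a₁ (g₁ : ℤ) = 1 := by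
    have h := Int.gcd_div_gcd_div_gcd (i := aZ) (j := (g : ℤ))
      (by rw [← hddef]; exact Nat.pos_of_ne_zero hd0)
    rw [← hddef] at h
    rw [ha₁def, hg₁def]
    have : ((g / d : ℕ) : ℤ) = (g : ℤ) / (d : ℤ) := Int.natCast_ediv g d
    rw [this]
    exact h
  obtain ⟨u, v, huv⟩ := (Int.isCoprime_iff_gcd_eq_one.mpr hcop)
  have hbez : (g₁ : ℤ) ∣ a₁ * u - 1 := ⟨-v, by linarith⟩
  obtain ⟨w, hw⟩ := hbez
  have hgC : (g : ℂ) ≠ 0 := Nat.cast_ne_zero.mpr hg0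
  have hlC : (l : ℂ) ≠ 0 := Nat.cast_ne_zero.mpr hl0
  have hdC : (d : ℂ) ≠ 0 := Nat.cast_ne_zero.mpr hd0
  have hg₁C : (g₁ : ℂ) ≠ 0 := Nat.cast_ne_zero.mpr hg₁0
  -- rescaling lemmas for eN
  have heg : ∀ x : ℤ, eN n ((l : ℤ) * x) = eN g x := by
    intro x
    rw [eN, eN]
    congr 1
    rw [hn]
    push_cast
    field_simp
  have heg₁ : ∀ x : ℤ, eN g ((d : ℤ) * x) = eN g₁ x := by
    intro x
    rw [eN, eN]
    congr 1
    rw [hg₁]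
    push_cast
    field_simp
  -- representative lemma for squares
  have hrep : ∀ (v : ZMod n) (r : ℤ), ((r : ZMod n) = v) → eN n (r ^ 2) = eN n ((v.val : ℤ) ^ 2) := by
    intro v r h
    have hdvd : (n : ℤ) ∣ r - (v.val : ℤ) := by
      rw [← ZMod.intCast_zmod_eq_zero_iff_dvd]
      push_cast
      rw [h, ZMod.natCast_val, ZMod.cast_id]
      ring
    obtain ⟨w', hw'⟩ := hdvd
    exact eN_congr n hn0 ⟨w' * (r + v.val), by linear_combination (r + ((v.val : ℕ) : ℤ)) * hw'⟩
  -- the convolution formula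
  have hcirc : A * gaussMatrix n = circ (convFn n a) := by
    rw [hAeq]
    funext i j
    rw [Matrix.mul_apply]
    show _ = convFn n a (j - i)
    rw [convFn]
    refine Fintype.sum_equiv (Equiv.subRight i) _ _ (fun t => ?_)
    simp only [Equiv.subRight_apply, circ, gaussMatrix, sub_sub_sub_cancel_right]
  have hconv : ∀ u : ZMod n, convFn n a u = c / Real.sqrt n * eN n ((u.val : ℤ) ^ 2) *
      ∑ j ∈ Finset.range g, eN g (aZ * (j : ℤ) ^ 2 - 2 * ((u.val : ℕ) : ℤ) * (j : ℤ)) := by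
    intro uu
    rw [convFn]
    -- restrict the sum to the support of `a`
    have hinj : ∀ x ∈ Finset.range g, ∀ y ∈ Finset.range g,
        ((x * l : ℕ) : ZMod n) = ((y * l : ℕ) : ZMod n) → x = y := by
      intro x hx y hy hxy
      rw [Finset.mem_range] at hx hy
      have hxn : x * l < n := by
        rw [hn, mul_comm l g]; exact (Nat.mul_lt_mul_right (Nat.pos_of_ne_zero hl0)).mpr hx
      have hyn : y * l < n := by
        rw [hn, mul_comm l g]; exact (Nat.mul_lt_mul_right (Nat.pos_of_ne_zero hl0)).mpr hy
      have := congrArg ZMod.val hxy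
      rw [ZMod.val_cast_of_lt hxn, ZMod.val_cast_of_lt hyn] at this
      exact Nat.eq_of_mul_eq_mul_right (Nat.pos_of_ne_zero hl0) this
    have h1 : (∑ s : ZMod n, a s * ((1 / Real.sqrt n : ℂ) *
          Complex.exp (2 * Real.pi * Complex.I * (((uu - s).val : ℂ) ^ 2) / n)))
        = ∑ s ∈ (Finset.range g).image (fun j : ℕ => ((j * l : ℕ) : ZMod n)), a s *
          ((1 / Real.sqrt n : ℂ) *
          Complex.exp (2 * Real.pi * Complex.I * (((uu - s).val : ℂ) ^ 2) / n)) := by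
      refine (Finset.sum_subset (Finset.subset_univ _) ?_).symm
      intro s _ hs
      have haz : a s = 0 := by
        refine ha0 s ?_
        rintro ⟨j, hj, hjs⟩
        exact hs (Finset.mem_image.mpr ⟨j, Finset.mem_range.mpr hj, hjs.symm⟩)
      rw [haz, zero_mul]
    rw [h1, Finset.sum_image hinj]
    rw [Finset.mul_sum]
    refine Finset.sum_congr rfl (fun j hj => ?_)
    rw [Finset.mem_range] at hj
    -- rewrite the Gauss factor
    have hcast : (((((uu.val : ℕ) : ℤ) - (j : ℤ) * (l : ℤ)) : ℤ) : ZMod n)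
        = uu - ((j * l : ℕ) : ZMod n) := by
      push_cast
      rw [ZMod.natCast_val, ZMod.cast_id]
    have hgauss : Complex.exp (2 * Real.pi * Complex.I *
          (((uu - ((j * l : ℕ) : ZMod n)).val : ℂ) ^ 2) / n)
        = eN n ((((uu.val : ℕ) : ℤ) - (j : ℤ) * (l : ℤ)) ^ 2) := by
      rw [hrep _ _ hcast, eN]
      congr 1
      push_cast
      ring
    -- rewrite the value of `a`
    have havj : a ((j * l : ℕ) : ZMod n) = c * eN n (k * l * (j : ℤ) ^ 2) := by
      rw [haval j hj, eN]
      congr 1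
      push_cast
      ring
    rw [hgauss, havj]
    -- combine exponentials
    have hcomb : eN n (k * l * (j : ℤ) ^ 2) *
          eN n ((((uu.val : ℕ) : ℤ) - (j : ℤ) * (l : ℤ)) ^ 2)
        = eN n (((uu.val : ℕ) : ℤ) ^ 2) *
          eN g (aZ * (j : ℤ) ^ 2 - 2 * ((uu.val : ℕ) : ℤ) * (j : ℤ)) := by
      rw [← eN_add, ← heg, ← eN_add]
      congr 1
      rw [haZdef]
      ring
    calc c * eN n (k * l * (j : ℤ) ^ 2) * ((1 / Real.sqrt n : ℂ) *
            eN n ((((uu.val : ℕ) : ℤ) - (j : ℤ) * (l : ℤ)) ^ 2))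
        = c / Real.sqrt n * (eN n (k * l * (j : ℤ) ^ 2) *
            eN n ((((uu.val : ℕ) : ℤ) - (j : ℤ) * (l : ℤ)) ^ 2)) := by ring
      _ = c / Real.sqrt n * (eN n (((uu.val : ℕ) : ℤ) ^ 2) *
            eN g (aZ * (j : ℤ) ^ 2 - 2 * ((uu.val : ℕ) : ℤ) * (j : ℤ))) := by rw [hcomb]
      _ = c / Real.sqrt n * eN n (((uu.val : ℕ) : ℤ) ^ 2) *
            eN g (aZ * (j : ℤ) ^ 2 - 2 * ((uu.val : ℕ) : ℤ) * (j : ℤ)) := by ring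
  -- splitting of the inner sum
  have hSsplit : ∀ T : ℤ, ∑ j ∈ Finset.range g, eN g (aZ * (j : ℤ) ^ 2 - 2 * T * (j : ℤ))
      = (∑ j ∈ Finset.range g₁, eN g (aZ * (j : ℤ) ^ 2 - 2 * T * (j : ℤ))) *
        (∑ j ∈ Finset.range d, eN g (-(2 * T * g₁)) ^ j) :=
    Ssplit g d g₁ aZ a₁ hg0 hg₁0 hg₁ ha₁ hgZ
  -- vanishing off the support
  have hzero : ∀ T : ℤ, ¬ ((d : ℤ) ∣ T) →
      (∑ j ∈ Finset.range d, eN g (-(2 * T * g₁)) ^ j) = 0 :=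
    Szero g d g₁ hg0 hg₁0 hd2 hgZ
  -- value on the support
  have hval1 : ∀ s : ℤ, ∑ j ∈ Finset.range g₁, eN g (aZ * (j : ℤ) ^ 2 - 2 * ((d : ℤ) * s) * (j : ℤ))
      = eN g₁ (-(u * s ^ 2)) * ∑ j ∈ Finset.range g₁, eN g₁ (a₁ * (j : ℤ) ^ 2) :=
    Sval g d g₁ aZ a₁ u w hg₁0 ha₁ hw heg₁
  -- assemble
  have hndg : n = d * (n / d) := (Nat.mul_div_cancel' hdn).symm
  refine ⟨d, n / d, hndg, convFn n a,
    c * d * (∑ j ∈ Finset.range g₁, eN g₁ (a₁ * (j : ℤ) ^ 2)) / Real.sqrt n,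
    (d : ℤ) - u * l, hcirc, ?_, ?_⟩
  · -- values on the support
    intro j hj
    have hjd : j * d < n := by
      have h1 : (j + 1) * d ≤ (n / d) * d := Nat.mul_le_mul_right d hj
      have h2 : (n / d) * d = n := Nat.div_mul_cancel hdn
      have h3 : 0 < d := Nat.pos_of_ne_zero hd0
      nlinarith
    have huval : ((j * d : ℕ) : ZMod n).val = j * d := ZMod.val_cast_of_lt hjd
    rw [hconv, huval]
    have hTT : ((j * d : ℕ) : ℤ) = (d : ℤ) * (j : ℤ) := by push_cast; ring
    rw [hTT, hSsplit ((d : ℤ) * (j : ℤ)), hval1 (j : ℤ)]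
    -- the geometric factor equals d
    have hone : eN g (-(2 * ((d : ℤ) * (j : ℤ)) * g₁)) = 1 := by
      refine eN_int_dvd g hg0 ⟨-(2 * j), ?_⟩
      rw [hgZ]; ring
    rw [hone]
    simp only [one_pow, Finset.sum_const, Finset.card_range, nsmul_eq_mul, mul_one]
    -- identify the exponential factors
    have hfin : eN n (((d : ℤ) * (j : ℤ)) ^ 2) * eN g₁ (-(u * (j : ℤ) ^ 2))
        = eN n (((d : ℤ) - u * l) * (d : ℤ) * (j : ℤ) ^ 2) := by
      have h1 : eN g₁ (-(u * (j : ℤ) ^ 2)) = eN n ((l : ℤ) * ((d : ℤ) * (-(u * (j : ℤ) ^ 2)))) := by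
        rw [heg, heg₁]
      rw [h1, ← eN_add]
      congr 1
      ring
    have hfin2 : Complex.exp (2 * Real.pi * Complex.I *
          ((((d : ℤ) - u * l : ℤ) : ℂ) * (d : ℂ) * (j : ℂ) ^ 2) / n)
        = eN n (((d : ℤ) - u * l) * (d : ℤ) * (j : ℤ) ^ 2) := by
      rw [eN]
      congr 1
      push_cast
      ring
    rw [hfin2, ← hfin]
    ring
  · -- vanishing off the support
    intro t ht
    have hndvd : ¬ ((d : ℤ) ∣ ((t.val : ℕ) : ℤ)) := by
      intro hdvd
      have hdvd' : d ∣ t.val := Int.natCast_dvd_natCast.mp hdvd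
      apply ht
      refine ⟨t.val / d, ?_, ?_⟩
      · exact Nat.div_lt_div_of_lt_of_dvd hdn (ZMod.val_lt t)
      · rw [Nat.div_mul_cancel hdvd']
        exact (ZMod.natCast_rightInverse t).symm
    rw [hconv, hSsplit, hzero _ hndvd, mul_zero, mul_zero]
end

section
/- Let n be an odd prime and M_n the n×n circulant matrix circ(m₀,...,m_{n−1}) with m_j = (1/√n)·e^{(2πi/n)·j²}. Then for 0 < s < n, the s-th power M_n^s is a circulant matrix all of whose entries are nonzero and of the form (on index t) c_s·e^{(2πi/n)·k_s·t²} with k_s ≡ s^{−1} (mod n), while M_n^n is a scalar multiple of the identity matrix. -/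
open Complex Real Matrix

noncomputable def ee (n : ℕ) (m : ℤ) : ℂ :=
  Complex.exp (2 * Real.pi * Complex.I * m / n)

lemma ee_add (n : ℕ) (a b : ℤ) : ee n (a + b) = ee n a * ee n b := by
  rw [ee, ee, ee, ← Complex.exp_add]; congr 1; push_cast; ring

lemma ee_nmul (n : ℕ) [NeZero n] (t : ℤ) : ee n (n * t) = 1 := by
  have hn : (n : ℂ) ≠ 0 := Nat.cast_ne_zero.2 (NeZero.ne n)
  rw [ee, show (2 * (Real.pi:ℂ) * Complex.I * ((n * t : ℤ) : ℂ) / n) = t * (2 * Real.pi * Complex.I) by push_cast; field_simp]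
  exact Complex.exp_int_mul_two_pi_mul_I t

lemma ee_congr (n : ℕ) [NeZero n] {a b : ℤ} (h : (a : ZMod n) = (b : ZMod n)) :
    ee n a = ee n b := by
  have hd : (n : ℤ) ∣ b - a := Int.ModEq.dvd ((ZMod.intCast_eq_intCast_iff a b n).mp h)
  obtain ⟨t, ht⟩ := hd
  have hb : b = a + n * t := by linarith
  rw [hb, ee_add, ee_nmul, mul_one]

noncomputable def ff (n : ℕ) (x : ZMod n) : ℂ := ee n x.val

lemma ff_intCast (n : ℕ) [NeZero n] (m : ℤ) : ff n ((m : ZMod n)) = ee n m := by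
  rw [ff]
  apply ee_congr
  push_cast [ZMod.natCast_val, ZMod.cast_id]; rfl

lemma ff_add (n : ℕ) [NeZero n] (x y : ZMod n) : ff n (x + y) = ff n x * ff n y := by
  rw [ff, ff, ff, ← ee_add]
  apply ee_congr
  push_cast [ZMod.natCast_val, ZMod.cast_id]; rfl

lemma ff_zero (n : ℕ) [NeZero n] : ff n 0 = 1 := by
  rw [ff, ZMod.val_zero, ee]
  norm_num [Complex.exp_zero]

lemma ee_one_ne_one (n : ℕ) (hn : 1 < n) : ee n 1 ≠ 1 := by
  rw [ee]
  intro h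
  obtain ⟨m, hm⟩ := Complex.exp_eq_one_iff.mp h
  have h2 : (2 * (Real.pi:ℂ) * Complex.I) ≠ 0 := by
    simp [Real.pi_ne_zero, Complex.I_ne_zero]
  have hn0 : (n : ℂ) ≠ 0 := Nat.cast_ne_zero.2 (by omega)
  have : (1 : ℂ) = m * n := by
    field_simp at hm
    apply mul_left_cancel₀ h2
    linear_combination (2 * (Real.pi:ℂ) * Complex.I) * hm

  have : (1 : ℤ) = m * n := by exact_mod_cast this
  have : (n : ℤ) ≤ 1 := Int.le_of_dvd one_pos ⟨m, by linarith [this]⟩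
  omega

lemma sum_ff_mul (n : ℕ) [NeZero n] (hp : n.Prime) (c : ZMod n) :
    ∑ x : ZMod n, ff n (c * x) = if c = 0 then (n : ℂ) else 0 := by
  haveI := Fact.mk hp
  rcases eq_or_ne c 0 with hc | hc
  · simp [hc, ff_zero, ZMod.card]
  · simp only [if_neg hc]
    have h1 : ∑ x : ZMod n, ff n (c * x) = ∑ x : ZMod n, ff n x := by
      apply Fintype.sum_equiv (Equiv.mulLeft₀ c hc)
      intro x; rfl
    rw [h1]
    have h2 : ff n 1 * ∑ x : ZMod n, ff n x = ∑ x : ZMod n, ff n x := by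
      rw [Finset.mul_sum]
      apply Fintype.sum_equiv (Equiv.addLeft (1 : ZMod n))
      intro x
      exact (ff_add n 1 x).symm
    have h3 : ff n 1 ≠ 1 := by
      have hv : ff n 1 = ee n 1 := by
        rw [ff]
        congr 1
        exact_mod_cast ZMod.val_one n
      rw [hv]; exact ee_one_ne_one n hp.one_lt
    have h4 : (ff n 1 - 1) * ∑ x : ZMod n, ff n x = 0 := by linear_combination h2
    rcases mul_eq_zero.mp h4 with h | h
    · exact absurd (sub_eq_zero.mp h) h3
    · exact h

lemma gauss_ne_zero (n : ℕ) [NeZero n] (hp : n.Prime) (hn2 : 2 < n) (b : ZMod n)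
    (hb : b ≠ 0) : ∑ j : ZMod n, ff n (b * j ^ 2) ≠ 0 := by
  haveI := Fact.mk hp
  have h2 : (2 : ZMod n) ≠ 0 := by
    rw [show (2 : ZMod n) = ((2 : ℕ) : ZMod n) by push_cast; rfl]
    rw [Ne, ZMod.natCast_eq_zero_iff]
    intro h
    have := Nat.le_of_dvd (by norm_num) h
    omega
  have hnC : (n : ℂ) ≠ 0 := Nat.cast_ne_zero.2 (NeZero.ne n)
  have key : (∑ j : ZMod n, ff n (b * j ^ 2)) * (∑ l : ZMod n, ff n (-(b * l ^ 2)))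
      = (n : ℂ) := by
    rw [Finset.sum_mul_sum]
    have e1 : ∀ j l : ZMod n, ff n (b * j ^ 2) * ff n (-(b * l ^ 2))
        = ff n (b * j ^ 2 - b * l ^ 2) := by
      intro j l; rw [← ff_add]; ring_nf
    simp_rw [e1]
    rw [Finset.sum_comm]
    have e2 : ∀ l : ZMod n, (∑ j : ZMod n, ff n (b * j ^ 2 - b * l ^ 2))
        = ∑ h : ZMod n, ff n ((2 * b * h) * l) * ff n (b * h ^ 2) := by
      intro l
      apply Fintype.sum_equiv (Equiv.subRight l)
      intro j
      rw [← ff_add]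
      congr 1
      simp only [Equiv.subRight_apply]
      ring
    simp_rw [e2]
    rw [Finset.sum_comm]
    have e3 : ∀ h : ZMod n, (∑ l : ZMod n, ff n ((2 * b * h) * l) * ff n (b * h ^ 2))
        = (if 2 * b * h = 0 then (n : ℂ) else 0) * ff n (b * h ^ 2) := by
      intro h
      rw [← Finset.sum_mul, sum_ff_mul n hp]
    simp_rw [e3]
    rw [Finset.sum_eq_single 0]
    · simp [ff_zero]
    · intro h _ hh
      have : 2 * b * h ≠ 0 := by
        simp [mul_eq_zero, h2, hb, hh]
      simp [this]
    · intro h; exact absurd (Finset.mem_univ 0) h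
  intro h0
  rw [h0, zero_mul] at key
  exact hnC key.symm


lemma circ_mul {n : ℕ} [NeZero n] (a b : ZMod n → ℂ) :
    circ a * circ b = circ (fun t => ∑ j : ZMod n, a j * b (t - j)) := by
  ext i j
  simp only [Matrix.mul_apply, circ]
  apply Fintype.sum_equiv (Equiv.subRight i)
  intro k
  simp only [Equiv.subRight_apply]
  have h : j - i - (k - i) = j - k := by ring
  rw [h]

lemma exp_eq_ee (n : ℕ) [NeZero n] (k : ℤ) (t : ZMod n) :
    Complex.exp (2 * Real.pi * Complex.I * ((k : ℂ) * (t.val : ℂ) ^ 2) / n)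
      = ff n ((k : ZMod n) * t ^ 2) := by
  have h1 : Complex.exp (2 * Real.pi * Complex.I * ((k : ℂ) * (t.val : ℂ) ^ 2) / n)
      = ee n (k * (t.val : ℤ) ^ 2) := by
    rw [ee]; norm_cast
  rw [h1, ff]
  apply ee_congr
  push_cast [ZMod.natCast_val, ZMod.cast_id]
  rfl

lemma gaussMatrix_eq (n : ℕ) [NeZero n] :
    gaussMatrix n = circ (fun j => (1 / Real.sqrt n : ℂ) * ff n (j ^ 2)) := by
  ext i j
  simp only [gaussMatrix, circ]
  set x := j - i with hx
  congr 1
  have h1 : Complex.exp (2 * Real.pi * Complex.I * ((x.val : ℂ) ^ 2) / n)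
      = ee n ((x.val : ℤ) ^ 2) := by
    rw [ee]; norm_cast
  rw [h1, ff]
  apply ee_congr
  push_cast [ZMod.natCast_val, ZMod.cast_id]
  rfl

lemma sqrt_ne (n : ℕ) [NeZero n] : (1 / Real.sqrt n : ℂ) ≠ 0 := by
  have h : (0:ℝ) < Real.sqrt n := Real.sqrt_pos.mpr (by
    have := Nat.pos_of_ne_zero (NeZero.ne n); exact_mod_cast this)
  simp [Complex.ofReal_ne_zero, h.ne']

lemma key (n : ℕ) [NeZero n] (hp : n.Prime) (hn2 : 2 < n) :
    ∀ s : ℕ, 0 < s → s < n →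
      ∃ (c : ℂ) (k : ℤ), c ≠ 0 ∧ (k : ZMod n) * (s : ZMod n) = 1 ∧
        (gaussMatrix n) ^ s = circ (fun t => c * ff n ((k : ZMod n) * t ^ 2)) := by
  haveI := Fact.mk hp
  have hs0 := sqrt_ne n
  intro s
  induction s with
  | zero => omega
  | succ s ih =>
    intro _ hlt
    rcases Nat.eq_zero_or_pos s with hs | hs
    · subst hs
      refine ⟨(1 / Real.sqrt n : ℂ), 1, hs0, by norm_num, ?_⟩
      rw [pow_one, gaussMatrix_eq]
      congr 1; funext t; norm_num
    · obtain ⟨c, k, hc, hk, hM⟩ := ih hs (by omega)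
      set s' : ZMod n := ((s : ℕ) : ZMod n) with hs'
      have hsne : s' ≠ 0 := by
        rw [hs', Ne, ZMod.natCast_eq_zero_iff]
        intro h; have := Nat.le_of_dvd hs h; omega
      set u : ZMod n := ((s + 1 : ℕ) : ZMod n) with hu
      have hune : u ≠ 0 := by
        rw [hu, Ne, ZMod.natCast_eq_zero_iff]
        intro h; have := Nat.le_of_dvd (by omega) h; omega
      have hus : u = s' + 1 := by rw [hu, hs']; push_cast; ring
      set b : ZMod n := (k : ZMod n) + 1 with hbdef
      have hbu : b * s' = u := by
        rw [hbdef, hus, add_mul, hk, one_mul, add_comm]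
      have hbne : b ≠ 0 := by
        intro h; rw [h, zero_mul] at hbu; exact hune hbu.symm
      have hb' : b * b⁻¹ = 1 := mul_inv_cancel₀ hbne
      have hu' : u * u⁻¹ = 1 := mul_inv_cancel₀ hune
      have hBU : b⁻¹ + u⁻¹ = 1 := by
        have hbune : b * u ≠ 0 := mul_ne_zero hbne hune
        apply mul_left_cancel₀ hbune
        rw [mul_one]
        linear_combination u * hb' + b * hu' + (-1 : ZMod n) * hbu + (-b) * hus
      set G : ℂ := ∑ j : ZMod n, ff n (b * j ^ 2) with hG
      have hGne : G ≠ 0 := gauss_ne_zero n hp hn2 b hbne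
      refine ⟨c * (1 / Real.sqrt n : ℂ) * G, ((u⁻¹.val : ℕ) : ℤ),
        mul_ne_zero (mul_ne_zero hc hs0) hGne, ?_, ?_⟩
      · push_cast [ZMod.natCast_val, ZMod.cast_id]
        exact inv_mul_cancel₀ hune
      · rw [pow_succ, hM, gaussMatrix_eq, circ_mul]
        apply congrArg
        funext t
        have step1 : ∀ j : ZMod n,
            (c * ff n ((k : ZMod n) * j ^ 2)) * ((1 / Real.sqrt n : ℂ) * ff n ((t - j) ^ 2))
            = (c * (1 / Real.sqrt n : ℂ)) * ff n ((k : ZMod n) * j ^ 2 + (t - j) ^ 2) := by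
          intro j; rw [ff_add]; ring
        simp_rw [step1]
        rw [← Finset.mul_sum]
        have step2 : (∑ j : ZMod n, ff n ((k : ZMod n) * j ^ 2 + (t - j) ^ 2))
            = ∑ j : ZMod n, ff n (b * j ^ 2 + u⁻¹ * t ^ 2) := by
          apply Fintype.sum_equiv (Equiv.subRight (t * b⁻¹))
          intro j
          simp only [Equiv.subRight_apply]
          congr 1
          have hk' : (k : ZMod n) = b - 1 := by rw [hbdef]; ring
          rw [hk']
          linear_combination (-(t^2)) * hBU + (2*t*j - t^2*b⁻¹) * hb'
        rw [step2]
        have step3 : ∀ j : ZMod n, ff n (b * j ^ 2 + u⁻¹ * t ^ 2)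
            = ff n (b * j ^ 2) * ff n (u⁻¹ * t ^ 2) := fun j => ff_add n _ _
        simp_rw [step3]
        rw [← Finset.sum_mul, ← hG]
        have : ((((u⁻¹.val : ℕ) : ℤ) : ZMod n)) = u⁻¹ := by
          push_cast [ZMod.natCast_val, ZMod.cast_id]
          rfl
        rw [this]
        ring

theorem gaussMatrix_pow_prime (n : ℕ) [NeZero n] (hp : n.Prime) (hodd : Odd n)
    (hn2 : 2 < n) :
    (∀ s : ℕ, 0 < s → s < n →
      ∃ (c : ℂ) (k : ℤ), c ≠ 0 ∧ (k : ZMod n) * (s : ZMod n) = 1 ∧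
        (gaussMatrix n) ^ s = circ (fun t => c *
          Complex.exp (2 * Real.pi * Complex.I * ((k : ℂ) * (t.val : ℂ) ^ 2) / n))) ∧
    (∃ c : ℂ, (gaussMatrix n) ^ n = c • (1 : Matrix (ZMod n) (ZMod n) ℂ)) := by
  haveI := Fact.mk hp
  constructor
  · intro s hs hsn
    obtain ⟨c, k, hc, hk, hM⟩ := key n hp hn2 s hs hsn
    refine ⟨c, k, hc, hk, ?_⟩
    rw [hM]
    apply congrArg
    funext t
    rw [exp_eq_ee]
  · obtain ⟨c, k, hc, hk, hM⟩ := key n hp hn2 (n - 1) (by omega) (by omega)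
    have hk' : (k : ZMod n) = -1 := by
      have h1 : ((n - 1 : ℕ) : ZMod n) = -1 := by
        rw [Nat.cast_sub (by omega)]
        simp [ZMod.natCast_self]
      rw [h1] at hk
      linear_combination -hk
    have h2 : (-2 : ZMod n) ≠ 0 := by
      rw [show (-2 : ZMod n) = -((2 : ℕ) : ZMod n) by push_cast; ring, neg_ne_zero,
        Ne, ZMod.natCast_eq_zero_iff]
      intro h; have := Nat.le_of_dvd (by norm_num) h; omega
    have hpow : (gaussMatrix n) ^ n = circ (fun t => ∑ j : ZMod n,
        (c * ff n ((k : ZMod n) * j ^ 2)) *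
          ((1 / Real.sqrt n : ℂ) * ff n ((t - j) ^ 2))) := by
      have hn' : gaussMatrix n ^ n = gaussMatrix n ^ ((n - 1) + 1) := by
        rw [Nat.sub_add_cancel (by omega)]
      rw [hn', pow_succ, hM, gaussMatrix_eq, circ_mul]
    set conv : ZMod n → ℂ := fun t => ∑ j : ZMod n,
        (c * ff n ((k : ZMod n) * j ^ 2)) *
          ((1 / Real.sqrt n : ℂ) * ff n ((t - j) ^ 2)) with hconv
    have hzero : ∀ t : ZMod n, t ≠ 0 → conv t = 0 := by
      intro t ht
      rw [hconv]
      have e1 : ∀ j : ZMod n, (c * ff n ((k : ZMod n) * j ^ 2)) *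
          ((1 / Real.sqrt n : ℂ) * ff n ((t - j) ^ 2))
          = (c * (1 / Real.sqrt n : ℂ) * ff n (t ^ 2)) * ff n ((-2 * t) * j) := by
        intro j
        have h4 : (-1 : ZMod n) * j ^ 2 + (t - j) ^ 2 = t ^ 2 + (-2 * t) * j := by ring
        calc (c * ff n ((k : ZMod n) * j ^ 2)) *
              ((1 / Real.sqrt n : ℂ) * ff n ((t - j) ^ 2))
            = (c * (1 / Real.sqrt n : ℂ)) *
              (ff n ((-1 : ZMod n) * j ^ 2) * ff n ((t - j) ^ 2)) := by rw [hk']; ring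
          _ = (c * (1 / Real.sqrt n : ℂ)) * ff n (t ^ 2 + (-2 * t) * j) := by
              rw [← ff_add, h4]
          _ = (c * (1 / Real.sqrt n : ℂ) * ff n (t ^ 2)) * ff n ((-2 * t) * j) := by
              rw [ff_add]; ring
      simp_rw [e1]
      rw [← Finset.mul_sum, sum_ff_mul n hp (-2 * t)]
      have h5 : (-2 * t : ZMod n) ≠ 0 := by
        intro h
        rcases mul_eq_zero.mp h with h | h
        · exact h2 h
        · exact ht h
      rw [if_neg h5, mul_zero]
    refine ⟨conv 0, ?_⟩
    rw [hpow]
    ext i j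
    by_cases hij : i = j
    · subst hij
      simp [circ, Matrix.smul_apply, Matrix.one_apply]
    · have hne : j - i ≠ 0 := sub_ne_zero.mpr (Ne.symm hij)
      simp only [circ, Matrix.smul_apply, Matrix.one_apply, if_neg hij, smul_zero]
      exact hzero _ hne
end

section
/- Let n > 2 be odd with smallest prime factor p_min, M_n the circulant Gauss matrix with entries m_j = (1/√n)·e^{(2πi/n)·j²}, and F the cyclic shift circulant circ(0,1,0,...,0). For any product C₁·C₂·...·C_m with each C_i ∈ {M_n, F}, containing a copies of M_n and b copies of F, the resulting circulant matrix circ(x₀,...,x_{n−1}) satisfies: |x₀|² = 1 if a ≡ 0 (mod n) and b ≡ 0 (mod n), and |x₀|² ≤ 1/p_min otherwise. -/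
open Complex Real Matrix

/-- The cyclic shift matrix `F = circ(0,1,0,...,0)`. -/
noncomputable def shiftF (n : ℕ) : Matrix (ZMod n) (ZMod n) ℂ :=
  circ (fun t => if t = 1 then 1 else 0)

/-!
Circulants over `ZMod n` are diagonalised by the discrete Fourier transform `𝓕`, and the diagonal
entry of `circ g` is the mean of its eigenvalues `𝓕 g k`. Write `e = stdAddChar`. Completing the
square (`2` is invertible as `n` is odd) gives the eigenvalues `γ * e (-(k / 2) ^ 2)` of the Gauss
matrix, with `|γ| = 1`, and `e (-k)` of the shift, so the product has eigenvalues
`γ ^ a * e (c k² + B k)` with `c = -a / 4`, `B = -b`. Substituting `x = y + r` in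
`|∑ₖ e (c k² + B k)|²` leaves `n * ∑_{c r = 0} e (B r)`: this is `n²` if `c = B = 0`, it vanishes
if only `c = 0`, and otherwise it is at most `n` times the order of the proper subgroup
`ker (c * ·)`, which is at most `n / p_min`.
-/

open Finset ZMod
open scoped ComplexConjugate

section QuadraticSum

variable {R : Type*} [CommRing R] [Fintype R] [DecidableEq R] {ψ : AddChar R ℂ}

theorem AddChar.sum_quadratic_mul_conj (hψ : ψ.IsPrimitive) (h2 : IsUnit (2 : R)) (c B : R) :
    (∑ x, ψ (c * x * x + B * x)) * conj (∑ x, ψ (c * x * x + B * x)) =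
      Fintype.card R * ∑ r with c * r = 0, ψ (B * r) := by
  have hshift (y r : R) : ψ (c * (r + y) * (r + y) + B * (r + y)) * conj (ψ (c * y * y + B * y)) =
      ψ (c * r * r + B * r) * ψ (y * (2 * c * r)) := by
    rw [← AddChar.map_neg_eq_conj, ← AddChar.map_add_eq_mul, ← AddChar.map_add_eq_mul]
    congr 1
    ring
  have hker (r : R) : 2 * c * r = 0 ↔ c * r = 0 := by
    rw [mul_assoc, h2.mul_right_eq_zero]
  calc (∑ x, ψ (c * x * x + B * x)) * conj (∑ x, ψ (c * x * x + B * x))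
      = ∑ y, ∑ r, ψ (c * r * r + B * r) * ψ (y * (2 * c * r)) := by
        rw [map_sum, sum_mul_sum, sum_comm]
        exact sum_congr rfl fun y _ =>
          (Fintype.sum_equiv (Equiv.addRight y) _ _ fun r => (hshift y r).symm).symm
    _ = ∑ r, ψ (c * r * r + B * r) * ∑ y, ψ (y * (2 * c * r)) := by
        simp_rw [mul_sum]
        exact sum_comm
    _ = Fintype.card R * ∑ r with c * r = 0, ψ (B * r) := by
        simp_rw [AddChar.sum_mulShift _ hψ, hker, Nat.cast_ite, Nat.cast_zero, mul_ite, mul_zero,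
          ← sum_filter, mul_sum]
        refine sum_congr rfl fun r hr => ?_
        rw [(mem_filter.mp hr).2, zero_mul, zero_add, mul_comm]

theorem AddChar.norm_sq_sum_quadratic (hψ : ψ.IsPrimitive) (h2 : IsUnit (2 : R)) (c B : R) :
    ‖∑ x, ψ (c * x * x + B * x)‖ ^ 2 = Fintype.card R * ‖∑ r with c * r = 0, ψ (B * r)‖ := by
  have h := congrArg norm (AddChar.sum_quadratic_mul_conj hψ h2 c B)
  rwa [Complex.mul_conj', norm_mul, Complex.norm_natCast, ← Complex.ofReal_pow,
    Complex.norm_real, Real.norm_of_nonneg (by positivity)] at h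

end QuadraticSum

theorem AddSubgroup.card_mul_minFac_le {G : Type*} [AddGroup G] [Finite G] {H : AddSubgroup G}
    (hH : H ≠ ⊤) : Nat.card H * (Nat.card G).minFac ≤ Nat.card G := by
  calc Nat.card H * (Nat.card G).minFac ≤ Nat.card H * H.index :=
        Nat.mul_le_mul_left _ (Nat.minFac_le_of_dvd (AddSubgroup.one_lt_index_of_ne_top hH)
          H.index_dvd_card)
    _ = Nat.card G := H.card_mul_index

def shiftSymbol (n : ℕ) : ZMod n → ℂ := fun t => if t = 1 then 1 else 0

theorem shiftF_eq_circ (n : ℕ) : shiftF n = circ (shiftSymbol n) := rfl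

noncomputable def gaussSymbol (n : ℕ) [NeZero n] : ZMod n → ℂ :=
  fun t => (1 / √n : ℂ) * stdAddChar (t * t)

section

variable {n : ℕ} [NeZero n]

theorem card_filter_mul_eq_zero_mul_minFac_le {c : ZMod n} (hc : c ≠ 0) :
    #{r | c * r = 0} * n.minFac ≤ n := by
  have hker : (AddMonoidHom.mulLeft c).ker ≠ ⊤ := fun h =>
    hc ((mul_one c).symm.trans (AddMonoidHom.mem_ker.mp (h ▸ AddSubgroup.mem_top 1)))
  have hcard : #{r | c * r = 0} = Nat.card (AddMonoidHom.mulLeft c).ker := by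
    simp [Nat.card_eq_fintype_card, Fintype.card_subtype, AddMonoidHom.mem_ker]
  simpa [hcard, Nat.card_zmod] using AddSubgroup.card_mul_minFac_le hker

theorem norm_sum_filter_mul_eq_zero_mul_minFac_le {c B : ZMod n} (h : c ≠ 0 ∨ B ≠ 0) :
    ‖∑ r with c * r = 0, stdAddChar (B * r)‖ * n.minFac ≤ n := by
  by_cases hc : c = 0
  · have hB : B ≠ 0 := h.resolve_left (not_not.mpr hc)
    simp [hc, mul_comm B, AddChar.sum_mulShift _ (isPrimitive_stdAddChar n), hB]
  · calc ‖∑ r with c * r = 0, stdAddChar (B * r)‖ * n.minFac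
        ≤ (#{r | c * r = 0} : ℝ) * n.minFac := by
          gcongr
          exact (norm_sum_le _ _).trans (by simp)
      _ ≤ n := mod_cast card_filter_mul_eq_zero_mul_minFac_le hc

theorem circ_mul_circ (a b : ZMod n → ℂ) :
    circ a * circ b = circ (fun s => ∑ t, a t * b (s - t)) := by
  ext i j
  refine Fintype.sum_equiv (Equiv.subRight i) _ _ fun k => ?_
  simp only [circ, Equiv.subRight_apply, sub_sub_sub_cancel_right]

theorem dft_convolution (a b : ZMod n → ℂ) :
    𝓕 (fun s => ∑ t, a t * b (s - t)) = 𝓕 a * 𝓕 b := by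
  ext k
  simp only [dft_apply, smul_eq_mul, Pi.mul_apply]
  rw [sum_mul_sum]
  simp_rw [mul_sum]
  rw [sum_comm]
  refine sum_congr rfl fun t _ => Fintype.sum_equiv (Equiv.subRight t) _ _ fun s => ?_
  have hsplit : -(s * k) = -(t * k) + -((s - t) * k) := by ring
  rw [Equiv.subRight_apply, hsplit, AddChar.map_add_eq_mul]
  ring

theorem circ_invDFT_mul (P Q : ZMod n → ℂ) :
    circ (𝓕⁻ P) * circ (𝓕⁻ Q) = circ (𝓕⁻ (P * Q)) := by
  obtain ⟨a, rfl⟩ := dft.surjective P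
  obtain ⟨b, rfl⟩ := dft.surjective Q
  rw [dft.symm_apply_apply, dft.symm_apply_apply, circ_mul_circ, ← dft_convolution,
    dft.symm_apply_apply]

theorem circ_invDFT_one : circ (𝓕⁻ (1 : ZMod n → ℂ)) = 1 := by
  ext i j
  simp only [circ, invDFT_apply, Pi.one_apply, smul_eq_mul, mul_one, Matrix.one_apply,
    AddChar.sum_mulShift _ (isPrimitive_stdAddChar n), ZMod.card, sub_eq_zero, eq_comm (a := j)]
  split_ifs <;> simp [NeZero.ne]

theorem gaussMatrix_eq_circ : gaussMatrix n = circ (gaussSymbol n) := by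
  ext i j
  have hval : (j - i) * (j - i) = (((j - i).val * (j - i).val : ℕ) : ZMod n) := by simp
  rw [gaussMatrix, circ, circ, gaussSymbol, hval, stdAddChar_apply, toCircle_natCast]
  push_cast
  ring_nf

theorem dft_shiftSymbol (k : ZMod n) : 𝓕 (shiftSymbol n) k = stdAddChar (-k) := by
  simp [dft_apply, shiftSymbol]

theorem dft_gaussSymbol {u : ZMod n} (hu : 2 * u = 1) (k : ZMod n) :
    𝓕 (gaussSymbol n) k = 𝓕 (gaussSymbol n) 0 * stdAddChar (-(u * k * (u * k))) := by
  rw [dft_apply_zero, sum_mul, dft_apply]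
  refine Fintype.sum_equiv (Equiv.subRight (u * k)) _ _ fun j => ?_
  have hsquare : -(j * k) + j * j = (j - u * k) * (j - u * k) + -(u * k * (u * k)) := by
    linear_combination (j * k) * hu
  rw [Equiv.subRight_apply, gaussSymbol, gaussSymbol, smul_eq_mul, mul_left_comm, mul_assoc,
    ← AddChar.map_add_eq_mul, hsquare, AddChar.map_add_eq_mul]

theorem gaussMatrix_ne_shiftF (hn : 1 < n) : gaussMatrix n ≠ shiftF n := by
  have : Fact (1 < n) := ⟨hn⟩
  intro h
  simpa [gaussMatrix, shiftF, circ, NeZero.ne] using congrFun (congrFun h 0) 0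

theorem list_prod_eq_circ (hne : gaussMatrix n ≠ shiftF n)
    (L : List (Matrix (ZMod n) (ZMod n) ℂ)) (hL : ∀ C ∈ L, C = gaussMatrix n ∨ C = shiftF n) :
    L.prod = circ (𝓕⁻ (𝓕 (gaussSymbol n) ^ L.count (gaussMatrix n) *
      𝓕 (shiftSymbol n) ^ L.count (shiftF n))) := by
  induction L with
  | nil => simp [circ_invDFT_one]
  | cons C L ih =>
    rw [List.prod_cons, ih fun D hD => hL D (List.mem_cons_of_mem _ hD)]
    rcases hL C List.mem_cons_self with rfl | rfl
    · nth_rewrite 1 [gaussMatrix_eq_circ, ← dft.symm_apply_apply (gaussSymbol n)]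
      rw [circ_invDFT_mul, List.count_cons_self, List.count_cons_of_ne hne, pow_succ]
      ring_nf
    · nth_rewrite 1 [shiftF_eq_circ, ← dft.symm_apply_apply (shiftSymbol n)]
      rw [circ_invDFT_mul, List.count_cons_self, List.count_cons_of_ne hne.symm, pow_succ]
      ring_nf

theorem norm_dft_gaussSymbol_zero {u : ZMod n} (hu : 2 * u = 1) : ‖𝓕 (gaussSymbol n) 0‖ = 1 := by
  have hsq :=
    AddChar.norm_sq_sum_quadratic (isPrimitive_stdAddChar n) (.of_mul_eq_one _ hu) 1 0
  simp only [one_mul, zero_mul, add_zero, filter_eq', mem_univ, if_true, sum_singleton,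
    AddChar.map_zero_eq_one, norm_one, mul_one, ZMod.card] at hsq
  simp only [dft_apply_zero, gaussSymbol]
  rw [← mul_sum, norm_mul, ← Real.sqrt_sq (norm_nonneg (∑ x : ZMod n, _)), hsq, norm_div, norm_one,
    Complex.norm_real, Real.norm_of_nonneg (Real.sqrt_nonneg _)]
  exact one_div_mul_cancel (Real.sqrt_pos.mpr (mod_cast Nat.pos_of_neZero n)).ne'

theorem list_prod_apply_zero_zero (hne : gaussMatrix n ≠ shiftF n) {u : ZMod n} (hu : 2 * u = 1)
    (L : List (Matrix (ZMod n) (ZMod n) ℂ)) (hL : ∀ C ∈ L, C = gaussMatrix n ∨ C = shiftF n) :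
    L.prod 0 0 = 𝓕 (gaussSymbol n) 0 ^ L.count (gaussMatrix n) / n *
      ∑ k, stdAddChar (-((L.count (gaussMatrix n) : ZMod n) * u * u) * k * k +
        -(L.count (shiftF n) : ZMod n) * k) := by
  rw [list_prod_eq_circ hne L hL, circ, sub_zero, invDFT_apply, smul_eq_mul, mul_sum, mul_sum]
  refine sum_congr rfl fun k _ => ?_
  rw [mul_zero, AddChar.map_zero_eq_one, one_smul, Pi.mul_apply, Pi.pow_apply, Pi.pow_apply,
    dft_gaussSymbol hu, dft_shiftSymbol, mul_pow, ← AddChar.map_nsmul_eq_pow,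
    ← AddChar.map_nsmul_eq_pow, mul_assoc, ← AddChar.map_add_eq_mul, nsmul_eq_mul, nsmul_eq_mul]
  ring_nf

theorem norm_sq_list_prod_apply_zero_zero (hne : gaussMatrix n ≠ shiftF n)
    {u : ZMod n} (hu : 2 * u = 1) (L : List (Matrix (ZMod n) (ZMod n) ℂ))
    (hL : ∀ C ∈ L, C = gaussMatrix n ∨ C = shiftF n) :
    ‖L.prod 0 0‖ ^ 2 = ‖∑ r with -((L.count (gaussMatrix n) : ZMod n) * u * u) * r = 0,
      stdAddChar (-(L.count (shiftF n) : ZMod n) * r)‖ / n := by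
  rw [list_prod_apply_zero_zero hne hu L hL, norm_mul, mul_pow,
    AddChar.norm_sq_sum_quadratic (isPrimitive_stdAddChar n) (.of_mul_eq_one _ hu), norm_div,
    norm_pow, norm_dft_gaussSymbol_zero hu, one_pow, Complex.norm_natCast, ZMod.card]
  field_simp

end

theorem product_of_gauss_and_shift (n : ℕ) [NeZero n] (hodd : Odd n) (hn2 : 2 < n)
    (L : List (Matrix (ZMod n) (ZMod n) ℂ))
    (hL : ∀ C ∈ L, C = gaussMatrix n ∨ C = shiftF n)
    (a b : ℕ) (ha : a = L.count (gaussMatrix n)) (hb : b = L.count (shiftF n)) :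
    (a % n = 0 ∧ b % n = 0 → ‖L.prod 0 0‖ ^ 2 = 1) ∧
    (¬ (a % n = 0 ∧ b % n = 0) → ‖L.prod 0 0‖ ^ 2 ≤ 1 / n.minFac) := by
  have h2 : IsUnit (2 : ZMod n) := by
    exact_mod_cast (ZMod.isUnit_iff_coprime 2 n).mpr (Nat.coprime_two_left.mpr hodd)
  obtain ⟨u, hu⟩ := h2.exists_right_inv
  have hu_unit : IsUnit u := .of_mul_eq_one_right _ hu
  have hnorm := norm_sq_list_prod_apply_zero_zero (gaussMatrix_ne_shiftF (by omega)) hu L hL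
  rw [← ha, ← hb] at hnorm
  have hc : -((a : ZMod n) * u * u) = 0 ↔ a % n = 0 := by
    rw [neg_eq_zero, hu_unit.mul_left_eq_zero, hu_unit.mul_left_eq_zero, ZMod.natCast_eq_zero_iff,
      Nat.dvd_iff_mod_eq_zero]
  have hB : -(b : ZMod n) = 0 ↔ b % n = 0 := by
    rw [neg_eq_zero, ZMod.natCast_eq_zero_iff, Nat.dvd_iff_mod_eq_zero]
  refine ⟨fun ⟨ha0, hb0⟩ => ?_, fun h => ?_⟩
  · rw [hnorm, hc.mpr ha0, hB.mpr hb0]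
    simp [NeZero.ne]
  · rw [hnorm, div_le_div_iff₀ (by positivity) (mod_cast n.minFac_pos), one_mul]
    exact norm_sum_filter_mul_eq_zero_mul_minFac_le (by rwa [Ne, Ne, hc, hB, ← not_and_or])
end

section
/- Let n be an odd prime and define the sequence k_j in ℤ/nℤ by k₁ = 1 and the recursion arising from k_{j} = 1 − (k_{j−1} + 1)^{−1} whenever k_{j−1} + 1 is invertible mod n. Then for all 1 ≤ j < n, k_j ≡ j^{−1} (mod n), and k_{n−1} + 1 ≡ 0 (mod n). -/
theorem k_sequence_inverse (n : ℕ) [Fact (n.Prime)] (hodd : Odd n)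
    (k : ℕ → ZMod n) (h1 : k 1 = 1)
    (hrec : ∀ j : ℕ, 2 ≤ j → j < n → k j = 1 - (k (j - 1) + 1)⁻¹) :
    (∀ j : ℕ, 1 ≤ j → j < n → k j = (j : ZMod n)⁻¹) ∧ k (n - 1) + 1 = 0 := by
  have hp : n.Prime := Fact.out
  have hn3 : 3 ≤ n := by
    rcases hodd with ⟨m, hm⟩
    have := hp.two_le
    omega
  have key : ∀ j : ℕ, 1 ≤ j → j < n → k j = (j : ZMod n)⁻¹ := by
    intro j
    induction j with
    | zero => omega
    | succ m ih =>
      intro h1m hmn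
      rcases Nat.eq_or_lt_of_le h1m with h | h
      · simp [← h, h1]
      · have hm1 : 1 ≤ m := by omega
        have hkm : k m = (m : ZMod n)⁻¹ := ih hm1 (by omega)
        have hrec' := hrec (m + 1) (by omega) hmn
        simp only [Nat.add_sub_cancel] at hrec'
        have hmne : (m : ZMod n) ≠ 0 := by
          intro hc
          have := (ZMod.natCast_eq_zero_iff m n).mp hc
          have := Nat.le_of_dvd (by omega) this
          omega
        have hm1ne : ((m + 1 : ℕ) : ZMod n) ≠ 0 := by
          intro hc
          have := (ZMod.natCast_eq_zero_iff (m+1) n).mp hc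
          have := Nat.le_of_dvd (by omega) this
          omega
        rw [hrec', hkm]
        push_cast at hm1ne ⊢
        have : (m : ZMod n)⁻¹ + 1 = ((m : ZMod n) + 1) * (m : ZMod n)⁻¹ := by
          field_simp
          ring
        rw [this, mul_inv, inv_inv]
        field_simp
        ring
  refine ⟨key, ?_⟩
  have h := key (n - 1) (by omega) (by omega)
  have hc : ((n - 1 : ℕ) : ZMod n) = -1 := by
    have : ((n - 1 : ℕ) : ZMod n) = (n : ZMod n) - 1 := by
      push_cast [Nat.cast_sub (by omega : 1 ≤ n)]
      ring
    simp [this]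
  rw [h, hc, inv_neg, inv_one]
  ring
end

section
/- For an odd integer n > 2, the absolute value of the quadratic Gauss sum Σ_{j=0}^{n−1} e^{(2πi/n)·j²} equals √n. -/
/-!
Write the sum as `S = ∑ x, ψ (x ^ 2)` over `ZMod n`, with `ψ` the standard primitive additive
character. In `S * conj S = ∑ x y, ψ (x ^ 2 - y ^ 2)` substitute `x = y + d`: then
`x ^ 2 - y ^ 2 = d ^ 2 + y * (2 * d)`, and summing over `y` kills every `d` with `2 * d ≠ 0`.
Since `2` is a unit, only `d = 0` survives, so `|S| ^ 2 = n`.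
-/

open ComplexConjugate

namespace AddChar

variable {R K : Type*} [CommRing R] [Fintype R] [RCLike K] {ψ : AddChar R K}

theorem sum_sq_mul_conj_sum_sq (hψ : ψ.IsPrimitive) (h2 : IsUnit (2 : R)) :
    (∑ x, ψ (x ^ 2)) * conj (∑ y, ψ (y ^ 2)) = Fintype.card R := by
  classical
  have shift (y : R) : ∑ x, ψ (x ^ 2) * ψ (-y ^ 2) = ∑ d, ψ (d ^ 2) * ψ (y * (2 * d)) := by
    rw [← Fintype.sum_bijective (y + ·) (AddGroup.addLeft_bijective y) _ _ fun _ ↦ rfl]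
    refine Finset.sum_congr rfl fun d _ ↦ ?_
    simp only [← map_add_eq_mul]
    ring_nf
  calc (∑ x, ψ (x ^ 2)) * conj (∑ y, ψ (y ^ 2))
      = ∑ y, ∑ x, ψ (x ^ 2) * ψ (-y ^ 2) := by
        simp only [map_sum, ← map_neg_eq_conj, Finset.sum_mul_sum]
        exact Finset.sum_comm
    _ = ∑ d, ψ (d ^ 2) * ∑ y, ψ (y * (2 * d)) := by
        simp only [shift, Finset.mul_sum]
        exact Finset.sum_comm
    _ = ∑ d : R, if d = 0 then (Fintype.card R : K) else 0 := by
        refine Finset.sum_congr rfl fun d _ ↦ ?_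
        rw [sum_mulShift _ hψ, h2.mul_right_eq_zero]
        split_ifs with hd <;> simp [hd]
    _ = Fintype.card R := by simp

theorem norm_sum_sq (hψ : ψ.IsPrimitive) (h2 : IsUnit (2 : R)) :
    ‖∑ x, ψ (x ^ 2)‖ = √(Fintype.card R) := by
  have h := sum_sq_mul_conj_sum_sq hψ h2
  rw [RCLike.mul_conj] at h
  rw [← Real.sqrt_sq (norm_nonneg _)]
  exact congrArg Real.sqrt (mod_cast h)

end AddChar

namespace ZMod

theorem sum_range_natCast {M : Type*} [AddCommMonoid M] (n : ℕ) [NeZero n]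
    (f : ZMod n → M) : ∑ j ∈ Finset.range n, f j = ∑ x, f x :=
  Finset.sum_nbij' (↑) val (by simp) (fun x _ ↦ by simpa using x.val_lt)
    (fun j hj ↦ val_cast_of_lt (Finset.mem_range.mp hj)) (fun x _ ↦ x.natCast_zmod_val)
    fun _ _ ↦ rfl

theorem stdAddChar_natCast_sq (n : ℕ) [NeZero n] (j : ℕ) :
    stdAddChar ((j : ZMod n) ^ 2) =
      Complex.exp (2 * Real.pi * Complex.I * ((j : ℂ) ^ 2) / n) := by
  have h := stdAddChar_coe (N := n) ((j : ℤ) ^ 2)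
  push_cast at h
  exact h

end ZMod

open Complex Real

theorem abs_gauss_sum_general (n : ℕ) (hodd : Odd n) :
    ‖∑ j ∈ Finset.range n,
      Complex.exp (2 * Real.pi * Complex.I * ((j : ℂ) ^ 2) / n)‖ = Real.sqrt n := by
  have : NeZero n := ⟨hodd.pos.ne'⟩
  have h2 : IsUnit (2 : ZMod n) := (ZMod.isUnit_iff_coprime 2 n).mpr hodd.coprime_two_left
  simp only [← ZMod.stdAddChar_natCast_sq]
  rw [ZMod.sum_range_natCast n (fun x ↦ ZMod.stdAddChar (x ^ 2)),
    AddChar.norm_sum_sq (ZMod.isPrimitive_stdAddChar n) h2, ZMod.card]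

theorem abs_gauss_sum (n : ℕ) (hodd : Odd n) (hn : 2 < n) :
    ‖∑ j ∈ Finset.range n,
      Complex.exp (2 * Real.pi * Complex.I * ((j : ℂ) ^ 2) / n)‖ = Real.sqrt n :=
  abs_gauss_sum_general n hodd
end
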